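/- arXiv:2410.20952 — 2 statements merged into one kernel-verified Lean document; each statement's English description precedes it below -/
import Mathlib

section
/- Fix m ≥ 2 and n ≥ 0. For every σ in the simple m-nary butterfly group B_{s,n}^{(m)}, D(σ) is a power of 2, and for each 0 ≤ k ≤ n the number of σ ∈ B_{s,n}^{(m)} with D(σ) = 2^k equals C(n,k)·(m−1)^k. Equivalently, for σ uniform on B_{s,n}^{(m)}, log₂ D(σ) has the Binomial(n, (m−1)/m) distribution (D doubles at a recursion level exactly when the corresponding Kronecker factor is not the identity, which happens with probability (m−1)/m). -/
/-!
Write `τ ^ r` as the rotation `x ↦ x + r` of `Fin m`; then `v ↦ τ^{v 0} ⊗ ⋯ ⊗ τ^{v (n-1)}`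
parametrises the butterfly group injectively by `v : Fin n → Fin m`.
The longest decreasing subsequence is multiplicative under `⊗`: `Fin (a * b)` carries the
lexicographic order of `Fin a × Fin b`, so a product of decreasing subsequences is decreasing,
and conversely a decreasing subsequence of `σ ⊗ π` projects to one of `σ` whose fibres are
decreasing subsequences of `π`. A rotation by `r ≠ 0` is increasing on the two arcs where
`x + r` does and does not wrap around, so its LDS is `2`. Hence `D = 2 ^ w`, where `w` is the
Hamming weight of `v`, and `C(n,k) (m-1)^k` vectors have weight `k`.
-/

/-- Kronecker product of permutations: `(i, r) ↦ (σ i, π r)` under the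
row-major identification `Fin (a * b) ≃ Fin a × Fin b`. -/
def permKron {a b : ℕ} (σ : Equiv.Perm (Fin a)) (π : Equiv.Perm (Fin b)) :
    Equiv.Perm (Fin (a * b)) :=
  finProdFinEquiv.symm.trans ((Equiv.prodCongr σ π).trans finProdFinEquiv)

/-- Direct (block) sum of permutations: `(i, r) ↦ (i, π i r)`. -/
def permBlockSum {a b : ℕ} (π : Fin a → Equiv.Perm (Fin b)) :
    Equiv.Perm (Fin (a * b)) :=
  finProdFinEquiv.symm.trans ((Equiv.prodCongrRight π).trans finProdFinEquiv)

/-- The simple `m`-nary butterfly permutations of `Fin (m ^ n)`: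
Kronecker products `τ^{a₁} ⊗ ⋯ ⊗ τ^{aₙ}` of powers of the standard `m`-cycle `τ = finRotate m`. -/
def simpleButterfly (m : ℕ) : (n : ℕ) → Set (Equiv.Perm (Fin (m ^ n)))
  | 0 => {1}
  | n + 1 =>
    {σ | ∃ (a : ℤ) (π : Equiv.Perm (Fin (m ^ n))), π ∈ simpleButterfly m n ∧
      σ = (finCongr (pow_succ' m n).symm).permCongr (permKron (finRotate m ^ a) π)}

/-- The nonsimple `m`-nary butterfly permutations of `Fin (m ^ n)`:
`B₀ = {1}`, `B_{n+1} = {(τ^a ⊗ id) ∘ (σ₁ ⊕ ⋯ ⊕ σ_m) : σᵢ ∈ B_n}`. -/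
def nonsimpleButterfly (m : ℕ) : (n : ℕ) → Set (Equiv.Perm (Fin (m ^ n)))
  | 0 => {1}
  | n + 1 =>
    {σ | ∃ (a : ℤ) (π : Fin m → Equiv.Perm (Fin (m ^ n))),
      (∀ i, π i ∈ nonsimpleButterfly m n) ∧
      σ = (finCongr (pow_succ' m n).symm).permCongr
        (permKron (finRotate m ^ a) 1 * permBlockSum π)}

/-- The length of the longest increasing subsequence of a permutation. -/
noncomputable def LIS {M : ℕ} (σ : Equiv.Perm (Fin M)) : ℕ :=
  sSup {k | ∃ t : Finset (Fin M), t.card = k ∧ StrictMonoOn (⇑σ) ↑t}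

/-- The length of the longest decreasing subsequence of a permutation. -/
noncomputable def LDS {M : ℕ} (σ : Equiv.Perm (Fin M)) : ℕ :=
  sSup {k | ∃ t : Finset (Fin M), t.card = k ∧ StrictAntiOn (⇑σ) ↑t}

/-- The number of cycles in the disjoint cycle decomposition of `σ`,
counting fixed points as cycles of length 1. -/
def numCycles {M : ℕ} (σ : Equiv.Perm (Fin M)) : ℕ :=
  Multiset.card σ.cycleType + (Finset.univ.filter fun x => σ x = x).card

/-- The number of fixed points of `σ`. -/
def numFixed {M : ℕ} (σ : Equiv.Perm (Fin M)) : ℕ :=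
  (Finset.univ.filter fun x => σ x = x).card

section LDS

variable {M : ℕ} {σ : Equiv.Perm (Fin M)}

lemma bddAbove_strictAntiOn_card (σ : Equiv.Perm (Fin M)) :
    BddAbove {k | ∃ t : Finset (Fin M), t.card = k ∧ StrictAntiOn σ t} :=
  ⟨M, by rintro _ ⟨t, rfl, -⟩; simpa using t.card_le_univ⟩

lemma card_le_lds {t : Finset (Fin M)} (ht : StrictAntiOn σ t) : t.card ≤ LDS σ :=
  le_csSup (bddAbove_strictAntiOn_card σ) ⟨t, rfl, ht⟩

lemma lds_le {c : ℕ} (h : ∀ t : Finset (Fin M), StrictAntiOn σ t → t.card ≤ c) :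
    LDS σ ≤ c :=
  csSup_le ⟨0, ∅, rfl, fun _ hx => by simp at hx⟩ (by rintro _ ⟨t, rfl, ht⟩; exact h t ht)

lemma exists_card_eq_lds (σ : Equiv.Perm (Fin M)) :
    ∃ t : Finset (Fin M), t.card = LDS σ ∧ StrictAntiOn σ t :=
  Nat.sSup_mem (s := {k | ∃ t : Finset (Fin M), t.card = k ∧ StrictAntiOn σ t})
    ⟨0, ∅, rfl, fun _ hx => by simp at hx⟩ (bddAbove_strictAntiOn_card σ)

lemma one_le_lds [NeZero M] (σ : Equiv.Perm (Fin M)) : 1 ≤ LDS σ :=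
  card_le_lds (t := {0}) (by simp)

lemma two_le_lds {x y : Fin M} (hxy : x < y) (hσ : σ y < σ x) : 2 ≤ LDS σ := by
  refine (Finset.card_pair hxy.ne).ge.trans (card_le_lds ?_)
  intro a ha b hb hab
  simp only [Finset.coe_pair, Set.mem_insert_iff, Set.mem_singleton_iff] at ha hb
  rcases ha with rfl | rfl <;> rcases hb with rfl | rfl
  exacts [(hab.ne rfl).elim, hσ, (hab.asymm hxy).elim, (hab.ne rfl).elim]

/-- A decreasing subsequence meets each fibre of `f` at most once. -/
lemma lds_le_card_of_strictMonoOn_fiber {β : Type*} [Fintype β] (f : Fin M → β)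
    (h : ∀ b, StrictMonoOn σ {x | f x = b}) : LDS σ ≤ Fintype.card β := by
  refine lds_le fun t ht => Finset.card_le_card_of_injOn f (by simp) fun x hx y hy hxy => ?_
  by_contra hne
  rcases lt_or_gt_of_ne hne with hlt | hlt
  · exact (ht hx hy hlt).asymm (h (f x) rfl hxy.symm hlt)
  · exact (ht hy hx hlt).asymm (h (f x) hxy.symm rfl hlt)

lemma lds_one [NeZero M] : LDS (1 : Equiv.Perm (Fin M)) = 1 :=
  le_antisymm
    ((lds_le_card_of_strictMonoOn_fiber (fun _ => ()) fun _ =>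
      strictMono_id.strictMonoOn _).trans_eq Fintype.card_unit)
    (one_le_lds _)

end LDS

lemma finProdFinEquiv_lt_finProdFinEquiv {a b : ℕ} {p q : Fin a × Fin b} :
    finProdFinEquiv p < finProdFinEquiv q ↔ toLex p < toLex q := by
  obtain ⟨⟨i, r⟩, ⟨j, s⟩⟩ := p, q
  simp only [Prod.Lex.toLex_lt_toLex, Fin.lt_def, finProdFinEquiv_apply_val, Fin.ext_iff]
  have block_le {i j : ℕ} (h : i < j) : b * i + b ≤ b * j := by
    simpa [Nat.mul_succ] using Nat.mul_le_mul_left b h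
  rcases lt_trichotomy i.val j.val with h | h | h
  · have := block_le h; omega
  · rw [h]; omega
  · have := block_le h; omega

section permKron

variable {a b : ℕ} (σ : Equiv.Perm (Fin a)) (π : Equiv.Perm (Fin b))

@[simp]
lemma permKron_apply_finProdFinEquiv (p : Fin a × Fin b) :
    permKron σ π (finProdFinEquiv p) = finProdFinEquiv (σ p.1, π p.2) := by
  simp [permKron, Prod.map]

lemma lds_permKron_le : LDS (permKron σ π) ≤ LDS σ * LDS π := by
  classical
  refine lds_le fun u hu => ?_
  set U := u.map finProdFinEquiv.symm.toEmbedding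
  have hU : ∀ p ∈ U, ∀ q ∈ U,
      toLex p < toLex q → toLex (σ q.1, π q.2) < toLex (σ p.1, π p.2) := by
    intro p hp q hq hpq
    simp only [U, Finset.mem_map_equiv, Equiv.symm_symm] at hp hq
    have := hu hp hq (finProdFinEquiv_lt_finProdFinEquiv.2 hpq)
    rwa [permKron_apply_finProdFinEquiv, permKron_apply_finProdFinEquiv,
      finProdFinEquiv_lt_finProdFinEquiv] at this
  have hrows : StrictAntiOn σ (U.image Prod.fst) := by
    simp only [Finset.coe_image]
    rintro _ ⟨p, hp, rfl⟩ _ ⟨q, hq, rfl⟩ hpq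
    rcases Prod.Lex.toLex_lt_toLex.1 (hU p hp q hq (Prod.Lex.toLex_lt_toLex.2 (.inl hpq)))
      with h | ⟨h, -⟩
    · exact h
    · exact (hpq.ne (σ.injective h).symm).elim
  have hcols : ∀ i ∈ U.image Prod.fst, (U.filter (·.1 = i)).card ≤ LDS π := by
    intro i _
    rw [← Finset.card_image_of_injOn (f := Prod.snd) fun p hp q hq h =>
      Prod.ext ((Finset.mem_filter.1 hp).2.trans (Finset.mem_filter.1 hq).2.symm) h]
    refine card_le_lds ?_
    simp only [Finset.coe_image, Finset.coe_filter]
    rintro _ ⟨p, ⟨hp, rfl⟩, rfl⟩ _ ⟨q, ⟨hq, hpq1⟩, rfl⟩ hpq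
    rcases Prod.Lex.toLex_lt_toLex.1
        (hU p hp q hq (Prod.Lex.toLex_lt_toLex.2 (.inr ⟨hpq1.symm, hpq⟩))) with h | ⟨-, h⟩
    · exact (lt_irrefl _ (hpq1 ▸ h)).elim
    · exact h
  calc u.card = U.card := (Finset.card_map _).symm
    _ ≤ LDS π * (U.image Prod.fst).card := Finset.card_le_mul_card_image U _ hcols
    _ ≤ LDS σ * LDS π := by rw [mul_comm]; exact Nat.mul_le_mul_right _ (card_le_lds hrows)

lemma le_lds_permKron : LDS σ * LDS π ≤ LDS (permKron σ π) := by
  obtain ⟨t, ht, htσ⟩ := exists_card_eq_lds σ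
  obtain ⟨s, hs, hsπ⟩ := exists_card_eq_lds π
  rw [← ht, ← hs, ← Finset.card_product, ← Finset.card_map finProdFinEquiv.toEmbedding]
  refine card_le_lds ?_
  simp only [Finset.coe_map, Equiv.coe_toEmbedding, Finset.coe_product]
  rintro _ ⟨⟨i, r⟩, ⟨hi, hr⟩, rfl⟩ _ ⟨⟨j, s⟩, ⟨hj, hs⟩, rfl⟩ hlt
  rw [permKron_apply_finProdFinEquiv, permKron_apply_finProdFinEquiv,
    finProdFinEquiv_lt_finProdFinEquiv, Prod.Lex.toLex_lt_toLex]
  rcases Prod.Lex.toLex_lt_toLex.1 (finProdFinEquiv_lt_finProdFinEquiv.1 hlt) with h | ⟨rfl, h⟩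
  · exact .inl (htσ hi hj h)
  · exact .inr ⟨rfl, hsπ hr hs h⟩

lemma lds_permKron : LDS (permKron σ π) = LDS σ * LDS π :=
  (lds_permKron_le σ π).antisymm (le_lds_permKron σ π)

end permKron

lemma permKron_inj {a b : ℕ} [NeZero a] [NeZero b] {σ σ' : Equiv.Perm (Fin a)}
    {π π' : Equiv.Perm (Fin b)} : permKron σ π = permKron σ' π' ↔ σ = σ' ∧ π = π' := by
  refine ⟨fun h => ?_, fun ⟨hσ, hπ⟩ => hσ ▸ hπ ▸ rfl⟩
  have h' (p : Fin a × Fin b) : (σ p.1, π p.2) = (σ' p.1, π' p.2) :=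
    finProdFinEquiv.injective (by simpa using congr($h (finProdFinEquiv p)))
  exact ⟨Equiv.ext fun i => congr_arg Prod.fst (h' (i, 0)),
    Equiv.ext fun r => congr_arg Prod.snd (h' (0, r))⟩

lemma lds_permCongr_finCongr {M N : ℕ} (h : M = N) (τ : Equiv.Perm (Fin M)) :
    LDS ((finCongr h).permCongr τ) = LDS τ := by
  subst h; rfl

def permKronProd {m : ℕ} : (n : ℕ) → (Fin n → Equiv.Perm (Fin m)) → Equiv.Perm (Fin (m ^ n))
  | 0, _ => 1
  | n + 1, f => (finCongr (pow_succ' m n).symm).permCongr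
      (permKron (f 0) (permKronProd n (Fin.tail f)))

lemma lds_permKronProd {m : ℕ} : ∀ {n : ℕ} (f : Fin n → Equiv.Perm (Fin m)),
    LDS (permKronProd n f) = ∏ i, LDS (f i)
  | 0, _ => by
    have : NeZero (m ^ 0) := ⟨by simp⟩
    rw [Fin.prod_univ_zero]
    exact lds_one
  | n + 1, f => by
    rw [permKronProd, lds_permCongr_finCongr, lds_permKron, lds_permKronProd, Fin.prod_univ_succ]
    rfl

lemma permKronProd_injective {m : ℕ} [NeZero m] :
    ∀ {n : ℕ}, Function.Injective (permKronProd (m := m) n)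
  | 0 => fun _ _ _ => Subsingleton.elim _ _
  | n + 1 => fun f g h => by
    obtain ⟨h0, htail⟩ := (permKron_inj (a := m) (b := m ^ n)).1
      ((finCongr (pow_succ' m n).symm).permCongr.injective h)
    rw [← Fin.cons_self_tail f, ← Fin.cons_self_tail g, h0, permKronProd_injective htail]

lemma finRotate_zpow {m : ℕ} [NeZero m] (a : ℤ) :
    finRotate m ^ a = Equiv.addRight (a • 1 : Fin m) := by
  rw [← Equiv.zsmul_addRight]
  exact congr($(Equiv.ext fun i => finRotate_apply i) ^ a)

lemma lds_addRight {m : ℕ} [NeZero m] (r : Fin m) :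
    LDS (Equiv.addRight r) = if r = 0 then 1 else 2 := by
  split_ifs with hr
  · rw [hr, Equiv.addRight_zero]
    exact lds_one
  have hr' : 0 < r.val := Fin.pos_iff_ne_zero.2 hr
  refine le_antisymm ?_ ?_
  · refine (lds_le_card_of_strictMonoOn_fiber (fun x : Fin m => decide (m ≤ x + r))
      fun b x hx y hy hxy => ?_).trans_eq Fintype.card_bool
    have hxy' := decide_eq_decide.1 (hx.trans hy.symm)
    rw [Fin.lt_def] at hxy ⊢
    simp only [Equiv.coe_addRight, Fin.val_add_eq_ite]
    split_ifs <;> omega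
  · refine two_le_lds (x := ⟨m - 1 - r, by omega⟩) (y := ⟨m - r, by omega⟩)
      (Fin.mk_lt_mk.2 (by omega)) ?_
    simp only [Fin.lt_def, Equiv.coe_addRight, Fin.val_add_eq_ite]
    split_ifs <;> omega

section Hamming

open Finset

variable {ι α : Type*} [Fintype ι] [DecidableEq ι] [Fintype α] [DecidableEq α] [Zero α]

lemma card_filter_support_eq (s : Finset ι) :
    #{v : ι → α | ({i | v i ≠ 0} : Finset ι) = s} = (Fintype.card α - 1) ^ #s := by
  have : ({v : ι → α | ({i | v i ≠ 0} : Finset ι) = s} : Finset _) =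
      Fintype.piFinset fun i => if i ∈ s then {0}ᶜ else {0} := by
    ext v
    simp only [mem_filter, mem_univ, true_and, Fintype.mem_piFinset, Finset.ext_iff]
    refine forall_congr' fun i => ?_
    split_ifs <;> simp [*]
  simp [this, Fintype.card_piFinset, prod_apply_ite, card_compl]

lemma card_filter_hammingNorm_eq (k : ℕ) :
    #{v : ι → α | hammingNorm v = k} = (Fintype.card ι).choose k * (Fintype.card α - 1) ^ k := by
  rw [card_eq_sum_card_fiberwise (f := fun v => ({i | v i ≠ 0} : Finset ι))
    (t := powersetCard k univ) fun v hv => by simpa [hammingNorm] using hv,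
    sum_const_nat fun s hs => ?_, card_powersetCard, card_univ]
  rw [mem_powersetCard] at hs
  rw [filter_filter, ← hs.2, ← card_filter_support_eq]
  congr 1
  exact filter_congr fun v _ => and_iff_right_of_imp fun h => by simp [hammingNorm, h]

end Hamming

section simpleButterfly

variable {m : ℕ} [NeZero m]

def simpleButterflyOf {n : ℕ} (v : Fin n → Fin m) : Equiv.Perm (Fin (m ^ n)) :=
  permKronProd n fun i => Equiv.addRight (v i)

open Fin.NatCast in
lemma simpleButterfly_eq_range :
    ∀ n, simpleButterfly m n = Set.range (simpleButterflyOf (m := m) (n := n))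
  | 0 => by
    rw [Set.range_unique]
    rfl
  | n + 1 => by
    ext σ
    simp only [simpleButterfly, simpleButterfly_eq_range n, Set.mem_ofPred_eq, Set.mem_range,
      exists_exists_eq_and]
    constructor
    · rintro ⟨a, w, rfl⟩
      exact ⟨Fin.cons (a • 1) w, by rw [finRotate_zpow]; rfl⟩
    · rintro ⟨v, rfl⟩
      refine ⟨(v 0).val, Fin.tail v, ?_⟩
      rw [finRotate_zpow, natCast_zsmul, nsmul_one, Fin.cast_val_eq_self]
      rfl

lemma simpleButterflyOf_injective {n : ℕ} :
    Function.Injective (simpleButterflyOf (m := m) (n := n)) := fun v w h =>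
  funext fun i => by simpa using congr($(permKronProd_injective h) i 0)

lemma lds_simpleButterflyOf {n : ℕ} (v : Fin n → Fin m) :
    LDS (simpleButterflyOf v) = 2 ^ hammingNorm v := by
  simp [simpleButterflyOf, lds_permKronProd, lds_addRight, Finset.prod_ite, hammingNorm]

end simpleButterfly

/-- For the simple `m`-nary butterfly group: every element has LDS a power of 2, and
the number of elements with `D(σ) = 2^k` is `C(n,k)·(m−1)^k`; i.e. `log₂ D(σ)` is
`Binom(n, (m−1)/m)` for `σ` uniform on `B_{s,n}^{(m)}`. -/
theorem simpleButterfly_LDS_binomial (m n : ℕ) (hm : 2 ≤ m) :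
    (∀ σ ∈ simpleButterfly m n, ∃ k, k ≤ n ∧ LDS σ = 2 ^ k) ∧
    (∀ k, k ≤ n →
      {σ | σ ∈ simpleButterfly m n ∧ LDS σ = 2 ^ k}.ncard =
        n.choose k * (m - 1) ^ k) := by
  have : NeZero m := ⟨by omega⟩
  rw [simpleButterfly_eq_range]
  refine ⟨?_, fun k _ => ?_⟩
  · rintro _ ⟨v, rfl⟩
    exact ⟨hammingNorm v, hammingNorm_le_card_fintype.trans_eq (Fintype.card_fin n),
      lds_simpleButterflyOf v⟩
  · have hfiber : {σ | σ ∈ Set.range simpleButterflyOf ∧ LDS σ = 2 ^ k} =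
        simpleButterflyOf '' {v : Fin n → Fin m | hammingNorm v = k} := by
      ext σ
      constructor
      · rintro ⟨⟨v, rfl⟩, h⟩
        exact ⟨v, Nat.pow_right_injective le_rfl ((lds_simpleButterflyOf v).symm.trans h), rfl⟩
      · rintro ⟨v, hv, rfl⟩
        exact ⟨⟨v, rfl⟩, hv ▸ lds_simpleButterflyOf v⟩
    rw [hfiber, Set.ncard_image_of_injective _ simpleButterflyOf_injective,
      Set.ncard_eq_toFinset_card', Set.toFinset_ofPred, card_filter_hammingNorm_eq,
      Fintype.card_fin, Fintype.card_fin]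
end

section
/- For n ≥ 0 and k ≥ 1 let b(n,k) denote the number of permutations σ in the nonsimple binary butterfly group B_{2^n} with L(σ) = k (so b(n,k) = 0 for k > 2^n). Then for all n ≥ 0 and all k ≥ 1: b(n+1, k) = b(n,k)² + Σ_{j=1}^{k−1} b(n,j)·(b(n, k−j) + 2·b(n,k)). -/
/-- `b(n,k)`: the number of nonsimple binary butterfly permutations `σ ∈ B_{2^n}`
with `L(σ) = k`. -/
noncomputable def bCount (n k : ℕ) : ℕ :=
  {σ | σ ∈ nonsimpleButterfly 2 n ∧ LIS σ = k}.ncard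

open Equiv Finset Fin

section LIS

variable {M : ℕ}

lemma LIS_set_nonempty (σ : Perm (Fin M)) :
    {k | ∃ t : Finset (Fin M), #t = k ∧ StrictMonoOn σ t}.Nonempty :=
  ⟨0, ∅, rfl, by simp [StrictMonoOn]⟩

lemma bddAbove_LIS_set (σ : Perm (Fin M)) :
    BddAbove {k | ∃ t : Finset (Fin M), #t = k ∧ StrictMonoOn σ t} :=
  ⟨M, by rintro k ⟨t, rfl, -⟩; simpa using t.card_le_univ⟩

lemma card_le_LIS {σ : Perm (Fin M)} {t : Finset (Fin M)} (h : StrictMonoOn σ t) :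
    #t ≤ LIS σ :=
  le_csSup (bddAbove_LIS_set σ) ⟨t, rfl, h⟩

lemma LIS_le {σ : Perm (Fin M)} {m : ℕ}
    (h : ∀ t : Finset (Fin M), StrictMonoOn σ t → #t ≤ m) : LIS σ ≤ m :=
  csSup_le (LIS_set_nonempty σ) (by rintro k ⟨t, rfl, ht⟩; exact h t ht)

lemma exists_card_eq_LIS (σ : Perm (Fin M)) :
    ∃ t : Finset (Fin M), #t = LIS σ ∧ StrictMonoOn σ t :=
  Nat.sSup_mem (LIS_set_nonempty σ) (bddAbove_LIS_set σ)

lemma one_le_LIS [NeZero M] (σ : Perm (Fin M)) : 1 ≤ LIS σ :=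
  card_le_LIS (t := {0}) (by simp)

lemma LIS_permCongr_finCongr {M' : ℕ} (h : M = M') (σ : Perm (Fin M)) :
    LIS ((finCongr h).permCongr σ) = LIS σ := by
  subst h
  rfl

section Semiconj

variable {m : ℕ} {σ : Perm (Fin m)} {σ' : Perm (Fin M)} {e e' : Fin m → Fin M}

lemma StrictMonoOn.image_of_semiconj (he : StrictMono e) (he' : StrictMono e')
    (hσ : ∀ x, σ' (e x) = e' (σ x)) {s : Set (Fin m)} (h : StrictMonoOn σ s) :
    StrictMonoOn σ' (e '' s) := by
  rintro _ ⟨x, hx, rfl⟩ _ ⟨y, hy, rfl⟩ hxy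
  rw [hσ, hσ]
  exact he' (h hx hy (he.lt_iff_lt.mp hxy))

lemma StrictMonoOn.preimage_of_semiconj (he : StrictMono e) (he' : StrictMono e')
    (hσ : ∀ x, σ' (e x) = e' (σ x)) {s : Set (Fin M)} (h : StrictMonoOn σ' s) :
    StrictMonoOn σ (e ⁻¹' s) := by
  intro x hx y hy hxy
  have := h hx hy (he hxy)
  rwa [hσ, hσ, he'.lt_iff_lt] at this

lemma LIS_le_LIS_of_semiconj (he : StrictMono e) (he' : StrictMono e')
    (hσ : ∀ x, σ' (e x) = e' (σ x)) : LIS σ ≤ LIS σ' := by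
  obtain ⟨t, ht, hmono⟩ := exists_card_eq_LIS σ
  rw [← ht, ← card_image_of_injective t he.injective]
  exact card_le_LIS (by rw [coe_image]; exact hmono.image_of_semiconj he he' hσ)

lemma card_preimage_le_LIS_of_semiconj (he : StrictMono e) (he' : StrictMono e')
    (hσ : ∀ x, σ' (e x) = e' (σ x)) {t : Finset (Fin M)} (h : StrictMonoOn σ' t) :
    #(t.preimage e he.injective.injOn) ≤ LIS σ :=
  card_le_LIS (by rw [coe_preimage]; exact h.preimage_of_semiconj he he' hσ)

end Semiconj

end LIS

section Blocks

variable {m n : ℕ}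

lemma Fin.castAdd_lt_natAdd (a : Fin m) (b : Fin n) : castAdd n a < natAdd m b := by
  rw [Fin.lt_def, val_castAdd, val_natAdd]
  omega

lemma card_le_card_preimage_castAdd_add_card_preimage_natAdd (t : Finset (Fin (m + n))) :
    #t ≤ #(t.preimage (castAdd n) (strictMono_castAdd n).injective.injOn) +
      #(t.preimage (natAdd m) (strictMono_natAdd m).injective.injOn) := by
  calc #t ≤ #((t.preimage (castAdd n) _).image (castAdd n) ∪
        (t.preimage (natAdd m) _).image (natAdd m)) := by
        refine card_le_card fun x hx => ?_
        induction x using Fin.addCases <;> simp [hx]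
    _ ≤ _ := (card_union_le _ _).trans (add_le_add card_image_le card_image_le)

theorem LIS_eq_add_of_castAdd_natAdd {f : Perm (Fin (m + n))} {g : Perm (Fin m)}
    {h : Perm (Fin n)} (hg : ∀ r, f (castAdd n r) = castAdd n (g r))
    (hh : ∀ r, f (natAdd m r) = natAdd m (h r)) :
    LIS f = LIS g + LIS h := by
  apply le_antisymm
  · refine LIS_le fun t ht => (card_le_card_preimage_castAdd_add_card_preimage_natAdd t).trans ?_
    exact add_le_add
      (card_preimage_le_LIS_of_semiconj (strictMono_castAdd n) (strictMono_castAdd n) hg ht)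
      (card_preimage_le_LIS_of_semiconj (strictMono_natAdd m) (strictMono_natAdd m) hh ht)
  · obtain ⟨t₁, ht₁, hmono₁⟩ := exists_card_eq_LIS g
    obtain ⟨t₂, ht₂, hmono₂⟩ := exists_card_eq_LIS h
    have hdisj : Disjoint (t₁.image (castAdd n)) (t₂.image (natAdd m)) := by
      simp only [disjoint_left, mem_image, not_exists, not_and]
      rintro _ ⟨a, -, rfl⟩ b - hba
      exact (castAdd_lt_natAdd a b).ne hba.symm
    have hmono : StrictMonoOn f ↑(t₁.image (castAdd n) ∪ t₂.image (natAdd m)) := by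
      rw [coe_union, coe_image, coe_image]
      rintro _ (⟨a, ha, rfl⟩ | ⟨a, ha, rfl⟩) _ (⟨b, hb, rfl⟩ | ⟨b, hb, rfl⟩) hab
      · exact hmono₁.image_of_semiconj (strictMono_castAdd n) (strictMono_castAdd n) hg
          ⟨a, ha, rfl⟩ ⟨b, hb, rfl⟩ hab
      · rw [hg, hh]
        exact castAdd_lt_natAdd _ _
      · exact absurd hab (castAdd_lt_natAdd b a).asymm
      · exact hmono₂.image_of_semiconj (strictMono_natAdd m) (strictMono_natAdd m) hh
          ⟨a, ha, rfl⟩ ⟨b, hb, rfl⟩ hab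
    calc LIS g + LIS h = #(t₁.image (castAdd n) ∪ t₂.image (natAdd m)) := by
          rw [card_union_of_disjoint hdisj,
            card_image_of_injective _ (strictMono_castAdd n).injective,
            card_image_of_injective _ (strictMono_natAdd m).injective, ht₁, ht₂]
      _ ≤ LIS f := card_le_LIS hmono

theorem LIS_eq_max_of_castAdd_natAdd_swap {f : Perm (Fin (n + n))} {g h : Perm (Fin n)}
    (hg : ∀ r, f (castAdd n r) = natAdd n (g r)) (hh : ∀ r, f (natAdd n r) = castAdd n (h r)) :
    LIS f = max (LIS g) (LIS h) := by
  apply le_antisymm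
  · refine LIS_le fun t ht => ?_
    have hsplit := card_le_card_preimage_castAdd_add_card_preimage_natAdd t
    have hg' := card_preimage_le_LIS_of_semiconj (strictMono_castAdd n) (strictMono_natAdd n) hg ht
    have hh' := card_preimage_le_LIS_of_semiconj (strictMono_natAdd n) (strictMono_castAdd n) hh ht
    -- `f` reverses the order between the two blocks, so `t` lies in one of them.
    have hblock : t.preimage (castAdd n) (strictMono_castAdd n).injective.injOn = ∅ ∨
        t.preimage (natAdd n) (strictMono_natAdd n).injective.injOn = ∅ := by
      by_contra! hne
      obtain ⟨⟨a, ha⟩, ⟨b, hb⟩⟩ := hne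
      rw [mem_preimage] at ha hb
      have := ht ha hb (castAdd_lt_natAdd a b)
      rw [hg, hh] at this
      exact (castAdd_lt_natAdd _ _).asymm this
    rcases hblock with h0 | h0 <;> rw [h0, card_empty] at hsplit <;> omega
  · exact max_le
      (LIS_le_LIS_of_semiconj (strictMono_castAdd n) (strictMono_natAdd n) hg)
      (LIS_le_LIS_of_semiconj (strictMono_natAdd n) (strictMono_castAdd n) hh)

end Blocks

lemma permKron_one_mul_permBlockSum_apply {a b : ℕ} (ρ : Perm (Fin a))
    (π : Fin a → Perm (Fin b)) (i : Fin a) (r : Fin b) :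
    (permKron ρ 1 * permBlockSum π : Perm (Fin (a * b))) (finProdFinEquiv (i, r)) =
      finProdFinEquiv (ρ i, π i r) := by
  simp [permKron, permBlockSum, Perm.mul_apply]

section ButterflyStep

variable {n : ℕ}

lemma exists_finRotate_two_zpow_eq (a : ℤ) :
    ∃ ε : Fin 2, finRotate 2 ^ a = finRotate 2 ^ (ε : ℕ) := by
  refine ⟨⟨(a % 2).toNat, by omega⟩, ?_⟩
  rw [← zpow_natCast, Int.toNat_of_nonneg (by omega)]
  exact zpow_eq_zpow_emod' a (n := 2) (by decide)

def butterflyStep (ε : Fin 2) (σ₁ σ₂ : Perm (Fin (2 ^ n))) : Perm (Fin (2 ^ (n + 1))) :=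
  (finCongr (pow_succ' 2 n).symm).permCongr
    (permKron (finRotate 2 ^ (ε : ℕ)) 1 * permBlockSum ![σ₁, σ₂])

lemma mem_nonsimpleButterfly_two_succ {σ : Perm (Fin (2 ^ (n + 1)))} :
    σ ∈ nonsimpleButterfly 2 (n + 1) ↔ ∃ ε σ₁ σ₂, σ₁ ∈ nonsimpleButterfly 2 n ∧
      σ₂ ∈ nonsimpleButterfly 2 n ∧ σ = butterflyStep ε σ₁ σ₂ := by
  constructor
  · rintro ⟨a, π, hπ, rfl⟩
    obtain ⟨ε, hε⟩ := exists_finRotate_two_zpow_eq a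
    refine ⟨ε, π 0, π 1, hπ 0, hπ 1, ?_⟩
    rw [butterflyStep, hε, show ![π 0, π 1] = π from funext (Fin.forall_fin_two.2 ⟨rfl, rfl⟩)]
  · rintro ⟨ε, σ₁, σ₂, h₁, h₂, rfl⟩
    exact ⟨ε, ![σ₁, σ₂], Fin.forall_fin_two.2 ⟨h₁, h₂⟩, by rw [butterflyStep, zpow_natCast]⟩

lemma butterflyStep_injective :
    Function.Injective fun q : Fin 2 × Perm (Fin (2 ^ n)) × Perm (Fin (2 ^ n)) =>
      butterflyStep q.1 q.2.1 q.2.2 := by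
  rintro ⟨ε, σ₁, σ₂⟩ ⟨ε', σ₁', σ₂'⟩ h
  have key (i : Fin 2) (r : Fin (2 ^ n)) :
      ((finRotate 2 ^ (ε : ℕ)) i, ![σ₁, σ₂] i r) =
        ((finRotate 2 ^ (ε' : ℕ)) i, ![σ₁', σ₂'] i r) := by
    apply finProdFinEquiv.injective
    rw [← permKron_one_mul_permBlockSum_apply, ← permKron_one_mul_permBlockSum_apply]
    exact congrArg (· (finProdFinEquiv (i, r))) ((permCongr _).injective h)
  have hε : ε = ε' := by
    have := congrArg Prod.fst (key 0 0)
    fin_cases ε <;> fin_cases ε' <;> simp_all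
  simp only [Prod.mk.injEq] at key
  refine Prod.ext hε (Prod.ext ?_ ?_) <;> ext r : 1
  · simpa using (key 0 r).2
  · simpa using (key 1 r).2

lemma finCongr_two_mul_finProdFinEquiv_zero {N : ℕ} (r : Fin N) :
    finCongr (two_mul N) (finProdFinEquiv (0, r)) = castAdd N r :=
  Fin.ext (by simp)

lemma finCongr_two_mul_finProdFinEquiv_one {N : ℕ} (r : Fin N) :
    finCongr (two_mul N) (finProdFinEquiv (1, r)) = natAdd N r :=
  Fin.ext (by simp [add_comm])

lemma LIS_butterflyStep (ε : Fin 2) (σ₁ σ₂ : Perm (Fin (2 ^ n))) :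
    LIS (butterflyStep ε σ₁ σ₂) = LIS ((finCongr (two_mul (2 ^ n))).permCongr
      (permKron (finRotate 2 ^ (ε : ℕ)) 1 * permBlockSum ![σ₁, σ₂])) := by
  rw [butterflyStep, LIS_permCongr_finCongr, LIS_permCongr_finCongr]

lemma LIS_butterflyStep_zero (σ₁ σ₂ : Perm (Fin (2 ^ n))) :
    LIS (butterflyStep 0 σ₁ σ₂) = LIS σ₁ + LIS σ₂ := by
  rw [LIS_butterflyStep]
  apply LIS_eq_add_of_castAdd_natAdd <;> intro r <;>
    simp only [← finCongr_two_mul_finProdFinEquiv_zero, ← finCongr_two_mul_finProdFinEquiv_one,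
      permCongr_apply, symm_apply_apply, permKron_one_mul_permBlockSum_apply] <;> rfl

lemma LIS_butterflyStep_one (σ₁ σ₂ : Perm (Fin (2 ^ n))) :
    LIS (butterflyStep 1 σ₁ σ₂) = max (LIS σ₁) (LIS σ₂) := by
  rw [LIS_butterflyStep]
  apply LIS_eq_max_of_castAdd_natAdd_swap <;> intro r <;>
    simp only [← finCongr_two_mul_finProdFinEquiv_zero, ← finCongr_two_mul_finProdFinEquiv_one,
      permCongr_apply, symm_apply_apply, permKron_one_mul_permBlockSum_apply] <;> rfl

end ButterflyStep

section Counting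

variable {α : Type*} (s : Finset α) (L : α → ℕ)

lemma card_filter_product_eq_sum_fiber (R : ℕ → ℕ → Prop) [DecidableRel R] (t : Finset ℕ)
    (ht : ∀ x ∈ s, ∀ y ∈ s, R (L x) (L y) → L x ∈ t) :
    #{p ∈ s ×ˢ s | R (L p.1) (L p.2)} = ∑ j ∈ t, #{x ∈ s | L x = j} * #{y ∈ s | R j (L y)} := by
  rw [card_eq_sum_card_fiberwise (f := fun p => L p.1) (t := t)]
  · refine sum_congr rfl fun j _ => ?_
    rw [filter_filter, ← card_product, ← filter_product]
    congr 1
    refine filter_congr fun p _ => ?_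
    constructor
    · rintro ⟨h, rfl⟩
      exact ⟨rfl, h⟩
    · rintro ⟨rfl, h⟩
      exact ⟨h, rfl⟩
  · intro p hp
    rw [mem_coe, mem_filter, mem_product] at hp
    exact ht _ hp.1.1 _ hp.1.2 hp.2

variable {s L}

lemma card_filter_add_eq (hL : ∀ x ∈ s, 1 ≤ L x) (k : ℕ) :
    #{p ∈ s ×ˢ s | L p.1 + L p.2 = k} =
      ∑ j ∈ Ico 1 k, #{x ∈ s | L x = j} * #{x ∈ s | L x = k - j} := by
  refine (card_filter_product_eq_sum_fiber s L (fun i j => i + j = k) (Ico 1 k)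
    fun x hx y hy h => ?_).trans (sum_congr rfl fun j hj => ?_)
  · have := hL x hx
    have := hL y hy
    simp only [mem_Ico]
    omega
  · rw [mem_Ico] at hj
    congr 2
    exact filter_congr fun y _ => by omega

lemma card_filter_le_eq (hL : ∀ x ∈ s, 1 ≤ L x) (k : ℕ) :
    #{x ∈ s | L x ≤ k} = #{x ∈ s | L x = k} + ∑ j ∈ Ico 1 k, #{x ∈ s | L x = j} := by
  rw [card_eq_sum_card_fiberwise (f := L) (t := insert k (Ico 1 k)), sum_insert (by simp)]
  · congr 1
    · rw [filter_filter]
      exact congrArg card (filter_congr fun x _ => by omega)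
    · refine sum_congr rfl fun j hj => ?_
      rw [mem_Ico] at hj
      rw [filter_filter]
      exact congrArg card (filter_congr fun x _ => by omega)
  · intro x hx
    rw [mem_coe, mem_filter] at hx
    rw [mem_coe, mem_insert, mem_Ico]
    have := hL x hx.1
    omega

lemma card_filter_max_eq (hL : ∀ x ∈ s, 1 ≤ L x) (k : ℕ) :
    #{p ∈ s ×ˢ s | max (L p.1) (L p.2) = k} =
      #{x ∈ s | L x = k} * #{x ∈ s | L x ≤ k} +
        ∑ j ∈ Ico 1 k, #{x ∈ s | L x = j} * #{x ∈ s | L x = k} := by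
  refine (card_filter_product_eq_sum_fiber s L (fun i j => max i j = k) (insert k (Ico 1 k))
    fun x hx y hy h => ?_).trans ?_
  · have := hL x hx
    simp only [mem_insert, mem_Ico]
    omega
  rw [sum_insert (by simp)]
  congr 1
  · congr 2
    exact filter_congr fun y _ => by omega
  · refine sum_congr rfl fun j hj => ?_
    rw [mem_Ico] at hj
    congr 2
    exact filter_congr fun y _ => by omega

end Counting

open Classical in
noncomputable def butterflyFinset (n : ℕ) : Finset (Perm (Fin (2 ^ n))) :=
  {σ | σ ∈ nonsimpleButterfly 2 n}

lemma bCount_eq_card (n k : ℕ) : bCount n k = #{σ ∈ butterflyFinset n | LIS σ = k} := by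
  rw [bCount, ← Set.ncard_coe_finset]
  congr 1
  ext σ
  simp [butterflyFinset]

lemma butterflyFinset_succ (n : ℕ) :
    butterflyFinset (n + 1) = (univ ×ˢ (butterflyFinset n ×ˢ butterflyFinset n)).image
      fun q => butterflyStep q.1 q.2.1 q.2.2 := by
  ext σ
  simp [butterflyFinset, mem_nonsimpleButterfly_two_succ, eq_comm, and_assoc]

lemma bCount_succ (n k : ℕ) :
    bCount (n + 1) k =
      #{p ∈ butterflyFinset n ×ˢ butterflyFinset n | LIS p.1 + LIS p.2 = k} +
        #{p ∈ butterflyFinset n ×ˢ butterflyFinset n | max (LIS p.1) (LIS p.2) = k} := by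
  rw [bCount_eq_card, butterflyFinset_succ, filter_image,
    card_image_of_injective _ butterflyStep_injective, card_filter, sum_product, Fin.sum_univ_two]
  simp only [LIS_butterflyStep_zero, LIS_butterflyStep_one, ← card_filter]

theorem bCount_recursion_general (n k : ℕ) :
    bCount (n + 1) k =
      bCount n k ^ 2 +
        ∑ j ∈ Finset.Ico 1 k, bCount n j * (bCount n (k - j) + 2 * bCount n k) := by
  have hL : ∀ σ ∈ butterflyFinset n, 1 ≤ LIS σ := fun σ _ => one_le_LIS σ
  rw [bCount_succ, card_filter_add_eq hL, card_filter_max_eq hL, card_filter_le_eq hL]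
  simp only [← bCount_eq_card, mul_add, sum_add_distrib, ← sum_mul]
  ring

/-- The recursion `b(n+1,k) = b(n,k)² + Σ_{j=1}^{k−1} b(n,j)·(b(n,k−j) + 2·b(n,k))`. -/
theorem bCount_recursion (n k : ℕ) (hk : 1 ≤ k) :
    bCount (n + 1) k =
      bCount n k ^ 2 +
        ∑ j ∈ Finset.Ico 1 k, bCount n j * (bCount n (k - j) + 2 * bCount n k) :=
  bCount_recursion_general n k
end
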